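/- Let O be a Hermitian 2^n × 2^n matrix and let 0 ≤ κ ≤ 2n. Then Tr((O ⊗ O) · Q_κ^0) = (−1)^{⌊κ/2⌋} · binom(2n, κ)^{−1/2} · P_κ(O), where P_κ(O) = 2^{−n} Σ_{|s|=κ} |Tr(O c^s)|² is the κ-purity of O. -/

import Mathlib

open Matrix Complex
open scoped Kronecker

noncomputable section

abbrev QIdx (n : ℕ) := Fin n → Fin 2
abbrev NMat (n : ℕ) := Matrix (QIdx n) (QIdx n) ℂ
abbrev NMat2 (n : ℕ) := Matrix (QIdx n × QIdx n) (QIdx n × QIdx n) ℂ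

/-- The 2×2 Pauli X matrix. -/
def σX : Matrix (Fin 2) (Fin 2) ℂ := !![0, 1; 1, 0]
/-- The 2×2 Pauli Y matrix. -/
def σY : Matrix (Fin 2) (Fin 2) ℂ := !![0, -Complex.I; Complex.I, 0]
/-- The 2×2 Pauli Z matrix. -/
def σZ : Matrix (Fin 2) (Fin 2) ℂ := !![1, 0; 0, -1]

/-- Tensor (Kronecker) product of `n` one-qubit matrices, realized on index type `Fin n → Fin 2`. -/
def tensor {n : ℕ} (M : Fin n → Matrix (Fin 2) (Fin 2) ℂ) : NMat n :=
  Matrix.of fun f g => ∏ i, M i (f i) (g i)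

/-- The Jordan–Wigner Majorana operator `c_μ` (0-based index: `c_{2i} = Z^{⊗i} X I…`,
`c_{2i+1} = Z^{⊗i} Y I…`). -/
def majorana (n : ℕ) (μ : Fin (2 * n)) : NMat n :=
  tensor fun j =>
    if (j : ℕ) < (μ : ℕ) / 2 then σZ
    else if (j : ℕ) = (μ : ℕ) / 2 then (if (μ : ℕ) % 2 = 0 then σX else σY)
    else 1

/-- Ordered product `c^s` of the Majorana operators indexed by a subset `s`. -/
def cProd (n : ℕ) (s : Finset (Fin (2 * n))) : NMat n :=
  ((s.sort (· ≤ ·)).map (majorana n)).prod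

/-- The module `B_κ`: the complex span of products of `κ` distinct Majoranas. -/
def Bspace (n κ : ℕ) : Submodule ℂ (NMat n) :=
  Submodule.span ℂ {M | ∃ s : Finset (Fin (2 * n)), s.card = κ ∧ M = cProd n s}

/-- The Pauli string with `Z` on qubit `j` and identity elsewhere. -/
def pauliZ (n : ℕ) (j : Fin n) : NMat n := tensor fun k => if k = j then σZ else 1

/-- The Pauli string with `X` on qubits `j` and `j+1` and identity elsewhere. -/
def pauliXX (n : ℕ) (j : Fin n) : NMat n :=
  tensor fun k => if (k : ℕ) = (j : ℕ) ∨ (k : ℕ) = (j : ℕ) + 1 then σX else 1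

/-- The parity operator `P = Z^{⊗n}`. -/
def parity (n : ℕ) : NMat n := tensor fun _ => σZ


/-- Normalization constant `(d √C(2n,κ))⁻¹` with `d = 2^n`. -/
def Qnorm (n κ : ℕ) : ℂ := ((2 ^ n : ℂ) * ((Real.sqrt (Nat.choose (2 * n) κ) : ℝ) : ℂ))⁻¹

/-- The quadratic symmetry `Q_κ^0 = (d √C(2n,κ))⁻¹ Σ_{|s|=κ} c^s ⊗ c^s`. -/
def Q0 (n κ : ℕ) : NMat2 n :=
  Qnorm n κ • ∑ s ∈ Finset.powersetCard κ (Finset.univ : Finset (Fin (2 * n))),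
    (cProd n s) ⊗ₖ (cProd n s)

/-- The sum of the (1-based) elements of `s`, i.e. `π(s)`. -/
def piSum (n : ℕ) (s : Finset (Fin (2 * n))) : ℕ := ∑ μ ∈ s, ((μ : ℕ) + 1)

/-- The quadratic symmetry
`Q_κ^1 = (d √C(2n,κ))⁻¹ (−i)^n i^{κ mod 2} Σ_{|s|=κ} (−1)^{π(s)} c^s ⊗ c^{s̄}`. -/
def Q1 (n κ : ℕ) : NMat2 n :=
  (Qnorm n κ * (-Complex.I) ^ n * Complex.I ^ (κ % 2)) •
    ∑ s ∈ Finset.powersetCard κ (Finset.univ : Finset (Fin (2 * n))),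
      ((-1 : ℂ)) ^ (piSum n s) • ((cProd n s) ⊗ₖ (cProd n sᶜ))

/-- The matchgate circuit generators `{Z_j} ∪ {X_j X_{j+1}}`. -/
def matchgateGens (n : ℕ) : Set (NMat n) :=
  {M | ∃ j : Fin n, M = pauliZ n j} ∪
  {M | ∃ j : Fin n, (j : ℕ) + 1 < n ∧ M = pauliXX n j}

/-- The two-copy representation `H ⊗ I + I ⊗ H` of a generator `H`. -/
def bigH (n : ℕ) (H : NMat n) : NMat2 n :=
  H ⊗ₖ (1 : NMat n) + (1 : NMat n) ⊗ₖ H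

/-- The `κ`-purity `P_κ(M) = 2^{−n} Σ_{|s|=κ} |Tr(M c^s)|²`. -/
def purity (n κ : ℕ) (M : NMat n) : ℝ :=
  (2 ^ n : ℝ)⁻¹ * ∑ s ∈ Finset.powersetCard κ (Finset.univ : Finset (Fin (2 * n))),
    ‖Matrix.trace (M * cProd n s)‖ ^ 2

/-!
Since `Tr((O ⊗ O)(c^s ⊗ c^s)) = Tr(O c^s)²`, the point is to compare `Tr(O c^s)²` with
`|Tr(O c^s)|²`. The Majorana operators are Hermitian and pairwise anticommuting, so reversing
the ordered product `c^s` costs the sign `(-1)^C(κ,2) = (-1)^⌊κ/2⌋`. Hence `(c^s)ᴴ = ±c^s`, and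
for Hermitian `O` also `conj Tr(O c^s) = ±Tr(O c^s)`, which turns the square into `±` the
squared modulus.
-/

lemma List.prod_mul_of_anticomm {R : Type*} [Ring R] (a : R) :
    ∀ l : List R, (∀ b ∈ l, a * b = -(b * a)) →
      l.prod * a = (-1 : ℤ) ^ l.length • (a * l.prod)
  | [], _ => by simp
  | b :: l, h => by
    have hb : b * a = -(a * b) := by rw [h b List.mem_cons_self, neg_neg]
    rw [List.prod_cons, mul_assoc,
      List.prod_mul_of_anticomm a l fun c hc => h c (List.mem_cons_of_mem b hc),
      mul_smul_comm, ← mul_assoc, hb, List.length_cons, pow_succ, ← smul_smul,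
      neg_mul, mul_assoc, neg_one_zsmul]

lemma List.prod_reverse_of_pairwise_anticomm {R : Type*} [Ring R] :
    ∀ l : List R, l.Pairwise (fun a b => a * b = -(b * a)) →
      l.reverse.prod = (-1 : ℤ) ^ l.length.choose 2 • l.prod
  | [], _ => by simp
  | a :: l, h => by
    rw [List.reverse_cons, List.prod_append, List.prod_singleton,
      List.prod_reverse_of_pairwise_anticomm l h.of_cons, smul_mul_assoc,
      List.prod_mul_of_anticomm a l (List.pairwise_cons.mp h).1, smul_smul, ← pow_add,
      List.prod_cons, List.length_cons, Nat.choose_succ_succ', Nat.choose_one_right, add_comm]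

lemma neg_one_pow_choose_two : ∀ k : ℕ, (-1 : ℤ) ^ k.choose 2 = (-1) ^ (k / 2)
  | 0 => rfl
  | 1 => rfl
  | k + 2 => by
    have hchoose : (k + 2).choose 2 = k.choose 2 + 2 * k + 1 := by
      simp [Nat.choose_succ_succ']
      ring
    rw [hchoose, show (k + 2) / 2 = k / 2 + 1 by omega, pow_succ, pow_add, pow_mul,
      neg_one_sq, one_pow, mul_one, neg_one_pow_choose_two k, pow_succ]

lemma sq_eq_neg_one_pow_mul_norm_sq {z : ℂ} {k : ℕ} (h : star z = (-1) ^ k * z) :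
    z ^ 2 = (-1) ^ k * (‖z‖ ^ 2 : ℝ) := by
  rw [Complex.ofReal_pow, ← Complex.conj_mul', ← star_def, h, ← mul_assoc, ← mul_assoc,
    ← pow_add, ← two_mul, pow_mul, neg_one_sq, one_pow, one_mul, sq]

lemma tensor_mul {n : ℕ} (M N : Fin n → Matrix (Fin 2) (Fin 2) ℂ) :
    tensor M * tensor N = tensor fun i => M i * N i := by
  ext f g
  simp only [tensor, mul_apply, of_apply, ← Finset.prod_mul_distrib]
  rw [Finset.prod_univ_sum (t := fun _ => Finset.univ)
    (f := fun i k => M i (f i) k * N i k (g i)), Fintype.piFinset_univ]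

lemma tensor_conjTranspose {n : ℕ} (M : Fin n → Matrix (Fin 2) (Fin 2) ℂ) :
    (tensor M)ᴴ = tensor fun i => (M i)ᴴ := by
  ext f g
  simp [tensor, conjTranspose_apply]

lemma tensor_eq_neg_of_eq_neg_at {n : ℕ} {M N : Fin n → Matrix (Fin 2) (Fin 2) ℂ} (j : Fin n)
    (hj : M j = -N j) (hne : ∀ i ≠ j, M i = N i) : tensor M = -tensor N := by
  classical
  ext f g
  rw [neg_apply]
  simp only [tensor, of_apply]
  rw [← Finset.mul_prod_erase _ _ (Finset.mem_univ j),
    ← Finset.mul_prod_erase _ _ (Finset.mem_univ j), hj, neg_apply, neg_mul,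
    Finset.prod_congr rfl fun i hi => by rw [hne i (Finset.ne_of_mem_erase hi)]]

lemma tensor_anticomm_of_anticomm_at {n : ℕ} {M N : Fin n → Matrix (Fin 2) (Fin 2) ℂ}
    (j : Fin n) (hj : M j * N j = -(N j * M j)) (hne : ∀ i ≠ j, Commute (M i) (N i)) :
    tensor M * tensor N = -(tensor N * tensor M) := by
  rw [tensor_mul, tensor_mul]
  exact tensor_eq_neg_of_eq_neg_at j hj fun i hi => (hne i hi).eq

lemma σX_mul_σZ : σX * σZ = -(σZ * σX) := by
  ext i j; fin_cases i <;> fin_cases j <;> simp [σX, σZ, mul_apply]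

lemma σY_mul_σZ : σY * σZ = -(σZ * σY) := by
  ext i j; fin_cases i <;> fin_cases j <;> simp [σY, σZ, mul_apply]

lemma σX_mul_σY : σX * σY = -(σY * σX) := by
  ext i j; fin_cases i <;> fin_cases j <;> simp [σX, σY, mul_apply]

def majoranaFactor (n : ℕ) (μ : Fin (2 * n)) (j : Fin n) : Matrix (Fin 2) (Fin 2) ℂ :=
  if (j : ℕ) < (μ : ℕ) / 2 then σZ
  else if (j : ℕ) = (μ : ℕ) / 2 then (if (μ : ℕ) % 2 = 0 then σX else σY)
  else 1

lemma majorana_eq_tensor (n : ℕ) (μ : Fin (2 * n)) :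
    majorana n μ = tensor (majoranaFactor n μ) := rfl

lemma majoranaFactor_conjTranspose (n : ℕ) (μ : Fin (2 * n)) (j : Fin n) :
    (majoranaFactor n μ j)ᴴ = majoranaFactor n μ j := by
  unfold majoranaFactor
  split_ifs
  all_goals first
    | simp
    | (ext a b; fin_cases a <;> fin_cases b <;> simp [σX, σY, σZ, conjTranspose_apply])

lemma majoranaFactor_commute {n : ℕ} (μ ν : Fin (2 * n)) (j : Fin n)
    (hj : (j : ℕ) ≠ min ((μ : ℕ) / 2) ((ν : ℕ) / 2)) :
    Commute (majoranaFactor n μ j) (majoranaFactor n ν j) := by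
  unfold majoranaFactor
  split_ifs <;> first
    | omega
    | exact Commute.refl _
    | exact Commute.one_left _
    | exact Commute.one_right _

lemma majoranaFactor_anticomm {n : ℕ} {μ ν : Fin (2 * n)} (hμν : μ ≠ ν) (j : Fin n)
    (hj : (j : ℕ) = min ((μ : ℕ) / 2) ((ν : ℕ) / 2)) :
    majoranaFactor n μ j * majoranaFactor n ν j
      = -(majoranaFactor n ν j * majoranaFactor n μ j) := by
  have : (μ : ℕ) ≠ ν := Fin.val_ne_of_ne hμν
  unfold majoranaFactor
  split_ifs <;> first
    | omega
    | simp [σX_mul_σZ, σY_mul_σZ, σX_mul_σY]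

lemma majorana_conjTranspose (n : ℕ) (μ : Fin (2 * n)) : (majorana n μ)ᴴ = majorana n μ := by
  rw [majorana_eq_tensor, tensor_conjTranspose]
  exact congrArg tensor (funext (majoranaFactor_conjTranspose n μ))

/-- On every qubit except the lower of the two sites `μ / 2`, `ν / 2` one of the factors is
`1` or both are `Z`; on that qubit a `Z` meets an `X` or `Y`, or (same site) `X` meets `Y`. -/
lemma majorana_anticomm {n : ℕ} {μ ν : Fin (2 * n)} (hμν : μ ≠ ν) :
    majorana n μ * majorana n ν = -(majorana n ν * majorana n μ) := by
  have hsite : min ((μ : ℕ) / 2) ((ν : ℕ) / 2) < n := by omega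
  exact tensor_anticomm_of_anticomm_at ⟨_, hsite⟩ (majoranaFactor_anticomm hμν _ rfl)
    fun i hi => majoranaFactor_commute μ ν i fun h => hi (Fin.ext h)

lemma cProd_conjTranspose (n : ℕ) (s : Finset (Fin (2 * n))) :
    (cProd n s)ᴴ = (-1 : ℤ) ^ s.card.choose 2 • cProd n s := by
  have hanticomm : ((s.sort (· ≤ ·)).map (majorana n)).Pairwise
      (fun a b => a * b = -(b * a)) :=
    List.Pairwise.map _ (fun _ _ => majorana_anticomm) (s.sort_nodup (· ≤ ·))
  rw [cProd, conjTranspose_list_prod, List.map_map,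
    show conjTranspose ∘ majorana n = majorana n from funext (majorana_conjTranspose n),
    List.prod_reverse_of_pairwise_anticomm _ hanticomm, List.length_map, Finset.length_sort]

lemma star_trace_mul_cProd {n : ℕ} {O : NMat n} (hO : O.IsHermitian)
    (s : Finset (Fin (2 * n))) :
    star (trace (O * cProd n s)) = (-1 : ℂ) ^ (s.card / 2) * trace (O * cProd n s) := by
  rw [← trace_conjTranspose, conjTranspose_mul, hO.eq, cProd_conjTranspose, smul_mul_assoc,
    trace_smul, trace_mul_comm, neg_one_pow_choose_two, zsmul_eq_mul]
  push_cast
  rfl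

lemma trace_kronecker_mul_cProd {n : ℕ} {O : NMat n} (hO : O.IsHermitian)
    (s : Finset (Fin (2 * n))) :
    trace ((O ⊗ₖ O) * (cProd n s ⊗ₖ cProd n s))
      = (-1) ^ (s.card / 2) * (‖trace (O * cProd n s)‖ ^ 2 : ℝ) := by
  rw [← mul_kronecker_mul, trace_kronecker, ← sq]
  exact sq_eq_neg_one_pow_mul_norm_sq (star_trace_mul_cProd hO s)

theorem trace_OO_Q0_general (n : ℕ) (κ : ℕ)
    (O : NMat n) (hO : O.IsHermitian) :
    Matrix.trace ((O ⊗ₖ O) * Q0 n κ) =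
      ((-1 : ℂ)) ^ (κ / 2) * (((Real.sqrt (Nat.choose (2 * n) κ) : ℝ) : ℂ))⁻¹ *
        ((purity n κ O : ℝ) : ℂ) := by
  have hterm : ∀ s ∈ Finset.powersetCard κ (Finset.univ : Finset (Fin (2 * n))),
      trace ((O ⊗ₖ O) * (cProd n s ⊗ₖ cProd n s))
        = (-1) ^ (κ / 2) * (‖trace (O * cProd n s)‖ ^ 2 : ℝ) := fun s hs => by
    rw [trace_kronecker_mul_cProd hO, (Finset.mem_powersetCard.mp hs).2]
  rw [Q0, Matrix.mul_smul, trace_smul, Matrix.mul_sum, trace_sum, Finset.sum_congr rfl hterm,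
    ← Finset.mul_sum, Qnorm, purity, smul_eq_mul]
  push_cast
  ring

/-- For Hermitian `O`: `Tr((O ⊗ O) Q_κ^0) = (−1)^{⌊κ/2⌋} C(2n,κ)^{−1/2} P_κ(O)`. -/
theorem trace_OO_Q0 (n : ℕ) (hn : 1 ≤ n) (κ : ℕ) (hκ : κ ≤ 2 * n)
    (O : NMat n) (hO : O.IsHermitian) :
    Matrix.trace ((O ⊗ₖ O) * Q0 n κ) =
      ((-1 : ℂ)) ^ (κ / 2) * (((Real.sqrt (Nat.choose (2 * n) κ) : ℝ) : ℂ))⁻¹ *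
        ((purity n κ O : ℝ) : ℂ) :=
  trace_OO_Q0_general n κ O hO
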